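/- Combining the Rudie–Wonham characterization with the right-quotient identity: for a nonempty language K ⊆ Σ* and mask P, P̃⁻¹(P̃(pref(K))) = ⋃_{a∈Σ} (P⁻¹P(pref(K)/a))·a ∪ {ε}. -/
import Mathlib


def maskW {S D : Type*} (f : S → Option D) (w : List S) : List D := w.filterMap f

def pref {S : Type*} (K : Set (List S)) : Set (List S) := {u | ∃ w ∈ K, u <+: w}

def ptilde {S D : Type*} (f : S → Option D) (w : List S) : List (D ⊕ S) :=
  match w.reverse with
  | [] => []
  | a :: t => (maskW f t.reverse).map Sum.inl ++ [Sum.inr a]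

lemma ptilde_concat {S D : Type*} (f : S → Option D) (t : List S) (a : S) :
    ptilde f (t ++ [a]) = (maskW f t).map Sum.inl ++ [Sum.inr a] := by
  simp [ptilde]

theorem stmt7 {S D : Type*} (f : S → Option D) (K : Set (List S)) (hK : K.Nonempty) :
    {w : List S | ptilde f w ∈ ptilde f '' pref K}
    = (⋃ a : S,
        (fun x => x ++ [a]) '' {w : List S | maskW f w ∈ maskW f '' {x | x ++ [a] ∈ pref K}})
      ∪ {[]} := by
  ext w
  constructor
  · rintro ⟨u, hu, heq⟩
    rcases w.eq_nil_or_concat with rfl | ⟨t, a, rfl⟩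
    · right; rfl
    · rw [List.concat_eq_append] at heq ⊢
      rw [ptilde_concat] at heq
      rcases u.eq_nil_or_concat with rfl | ⟨s, b, rfl⟩
      · simp [ptilde] at heq
      · rw [List.concat_eq_append] at heq hu
        rw [ptilde_concat] at heq
        have h2 := List.append_inj' heq rfl
        obtain ⟨h3, h4⟩ := h2
        have hb : b = a := by simpa using h4
        cases hb
        have hmask : maskW f s = maskW f t :=
          List.map_injective_iff.mpr Sum.inl_injective h3
        left
        refine Set.mem_iUnion.mpr ⟨a, ⟨t, ⟨s, hu, hmask⟩, rfl⟩⟩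
  · rintro (h | h)
    · obtain ⟨a, t, ⟨s, hs, hmask⟩, rfl⟩ := Set.mem_iUnion.mp h
      exact ⟨s ++ [a], hs, by rw [ptilde_concat, ptilde_concat, hmask]⟩
    · obtain ⟨k, hk⟩ := hK
      rcases h with rfl
      exact ⟨[], ⟨k, hk, List.nil_prefix⟩, rfl⟩
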